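/- arXiv:1111.6555 — 2 statements merged into one kernel-verified Lean document; each statement's English description precedes it below -/
import Mathlib

section
/- Let T ⊆ ℝⁿ be a closed regular set and I ⊆ ℤ₊ⁿ a finite regular set of multi-indices. Then G_{T,I} is dense in Γ_{T,I}: for every γ ∈ Γ_{T,I} and every δ > 0 there exists g ∈ G_{T,I} with ‖g − γ‖ < δ. -/
open MeasureTheory

/-- The monomial function `t ^ i = t₁^{i₁} ⋯ tₙ^{iₙ}` on `ℝⁿ`. -/
noncomputable def mono (n : ℕ) (i : Fin n → ℕ) (t : EuclideanSpace ℝ (Fin n)) : ℝ :=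
  ∏ k, t k ^ i k

/-- A set `T ⊆ ℝⁿ` is regular if it is nonempty and for every `t ∈ T` and `ε > 0` the
Lebesgue measure of `{x ∈ T : ‖x - t‖ < ε}` is positive. -/
def RegularSet (n : ℕ) (T : Set (EuclideanSpace ℝ (Fin n))) : Prop :=
  T.Nonempty ∧ ∀ t ∈ T, ∀ ε > (0 : ℝ), 0 < volume {x ∈ T | ‖x - t‖ < ε}

/-- A finite set `I` of multi-indices is regular if it is nonempty and for every `i ∈ I` the
set `σ_i = {j : j k = 0 or j k = i k for each k}` is contained in `I`. -/
def RegularIdx (n : ℕ) (I : Finset (Fin n → ℕ)) : Prop :=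
  I.Nonempty ∧ ∀ i ∈ I, ∀ j : Fin n → ℕ, (∀ k, j k = 0 ∨ j k = i k) → j ∈ I

/-- `Γ_{T,I}`: the set of all `γ ∈ ℝ^I` having a nonnegative Borel representing measure `ν`
on `T` with `∫_T |t^i| dν < ∞` and `∫_T t^i dν = γ_i` for all `i ∈ I`. -/
def Gamma (n : ℕ) (T : Set (EuclideanSpace ℝ (Fin n))) (I : Finset (Fin n → ℕ)) :
    Set (I → ℝ) :=
  {γ | ∃ ν : Measure (EuclideanSpace ℝ (Fin n)), ν Tᶜ = 0 ∧
    (∀ i : I, Integrable (mono n i) ν) ∧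
    (∀ i : I, ∫ t, mono n i t ∂ν = γ i)}

/-- `G_{T,I}`: the set of all nonzero `g ∈ ℝ^I` having a representing density
`f ∈ L¹(T, dt)`, `f ≥ 0` a.e., with `∫_T |t^i| f dt < ∞` and `∫_T t^i f dt = g_i`
for all `i ∈ I`. -/
def GSet (n : ℕ) (T : Set (EuclideanSpace ℝ (Fin n))) (I : Finset (Fin n → ℕ)) :
    Set (I → ℝ) :=
  {g | g ≠ 0 ∧ ∃ f : EuclideanSpace ℝ (Fin n) → ℝ,
    Integrable f (volume.restrict T) ∧
    (0 ≤ᵐ[volume.restrict T] f) ∧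
    (∀ i : I, Integrable (fun t => mono n i t * f t) (volume.restrict T)) ∧
    (∀ i : I, ∫ t in T, mono n i t * f t = g i)}

/-!
The moment vectors of nonnegative densities on `T` form a convex cone `K`, and `G_{T,I} = K \ {0}`.
If `γ ∈ Γ_{T,I}` were outside the closure of `K`, Farkas' lemma would give coefficients `c` with
`c ⬝ᵥ g ≥ 0` on `K` and `c ⬝ᵥ γ < 0`. Testing `K` against indicators of small neighbourhoods
shows that the polynomial `∑ cᵢ tⁱ` is nonnegative on the support of `dt` restricted to `T`,
which contains `T` by regularity; integrating it against the representing measure of `γ` gives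
`c ⬝ᵥ γ ≥ 0`. Since the zeroth moment of such an indicator is positive, `K ≠ {0}`, so `K` and
`K \ {0}` have the same closure.
-/

open Filter Topology

lemma LinearMap.apply_eq_dotProduct_single {ι R : Type*} [CommSemiring R] [Fintype ι]
    [DecidableEq ι] (f : (ι → R) →ₗ[R] R) (v : ι → R) :
    f v = (fun i => f (Pi.single i 1)) ⬝ᵥ v := by
  conv_lhs => rw [← Finset.univ_sum_single v]
  simp only [map_sum, dotProduct]
  refine Finset.sum_congr rfl fun i _ => ?_
  rw [mul_comm, ← smul_eq_mul, ← map_smul, ← Pi.single_smul', smul_eq_mul, mul_one]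

lemma PointedCone.closure_diff_zero {E : Type*} [AddCommGroup E] [Module ℝ E]
    [TopologicalSpace E] [ContinuousSMul ℝ E] (C : PointedCone ℝ E) {v : E} (hv : v ∈ C)
    (hv₀ : v ≠ 0) : closure ((C : Set E) \ {0}) = closure C := by
  refine (closure_mono Set.sdiff_subset).antisymm
    (closure_minimal (fun x hx => ?_) isClosed_closure)
  rcases eq_or_ne x 0 with rfl | hx₀
  · have hlim : Tendsto (fun t : ℝ => t • v) (𝓝[>] 0) (𝓝 0) := by
      simpa using ((tendsto_id (x := 𝓝 (0 : ℝ))).smul_const v).mono_left nhdsWithin_le_nhds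
    exact mem_closure_of_tendsto hlim (eventually_nhdsWithin_of_forall fun t ht =>
      ⟨C.smul_mem (le_of_lt ht) hv, smul_ne_zero (ne_of_gt ht) hv₀⟩)
  · exact subset_closure ⟨hx, hx₀⟩

section MomentCone

variable {X ι : Type*} [MeasurableSpace X]

def momentCone (μ : Measure X) (φ : ι → X → ℝ) : PointedCone ℝ (ι → ℝ) where
  carrier := {g | ∃ f : X → ℝ, Integrable f μ ∧ 0 ≤ᵐ[μ] f ∧
    (∀ i, Integrable (fun x => φ i x * f x) μ) ∧ ∀ i, ∫ x, φ i x * f x ∂μ = g i}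
  zero_mem' := ⟨0, integrable_zero _ _ _, ae_of_all _ fun _ => le_rfl,
    fun _ => by simp, fun _ => by simp⟩
  add_mem' := by
    rintro _ _ ⟨f₁, hf₁, hf₁_nonneg, hφf₁, hg₁⟩ ⟨f₂, hf₂, hf₂_nonneg, hφf₂, hg₂⟩
    refine ⟨f₁ + f₂, hf₁.add hf₂, ?_, fun i => ?_, fun i => ?_⟩
    · filter_upwards [hf₁_nonneg, hf₂_nonneg] with x h₁ h₂ using add_nonneg h₁ h₂
    · simp only [Pi.add_apply, mul_add]
      exact (hφf₁ i).add (hφf₂ i)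
    · simp only [Pi.add_apply, mul_add, integral_add (hφf₁ i) (hφf₂ i), hg₁, hg₂]
  smul_mem' := by
    rintro ⟨c, hc⟩ _ ⟨f, hf, hf_nonneg, hφf, hg⟩
    refine ⟨c • f, hf.smul c, ?_, fun i => ?_, fun i => ?_⟩
    · filter_upwards [hf_nonneg] with x hx using smul_nonneg hc hx
    · simp only [Pi.smul_apply, mul_smul_comm]
      exact (hφf i).smul c
    · simp only [Pi.smul_apply, mul_smul_comm, integral_smul, hg]
      rfl

variable {μ : Measure X} {φ : ι → X → ℝ}

lemma setIntegral_mem_momentCone {U : Set X} (hU : MeasurableSet U)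
    (hμU : μ U ≠ ⊤) (hφU : ∀ i, IntegrableOn (φ i) U μ) :
    (fun i => ∫ x in U, φ i x ∂μ) ∈ momentCone μ φ := by
  have hφ_indicator (i : ι) : (fun x => φ i x * U.indicator 1 x) = U.indicator (φ i) := by
    ext x; by_cases hx : x ∈ U <;> simp [hx]
  refine ⟨U.indicator 1, (integrable_indicator_iff hU).2 (integrableOn_const hμU),
    ae_of_all _ (Set.indicator_nonneg fun _ _ => zero_le_one), fun i => ?_, fun i => ?_⟩
  · rw [hφ_indicator]; exact (integrable_indicator_iff hU).2 (hφU i)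
  · rw [hφ_indicator, integral_indicator hU]

lemma dotProduct_integral [Fintype ι] {ν : Measure X} (hφ : ∀ i, Integrable (φ i) ν)
    (c : ι → ℝ) :
    c ⬝ᵥ (fun i => ∫ x, φ i x ∂ν) = ∫ x, c ⬝ᵥ (fun i => φ i x) ∂ν := by
  simp only [dotProduct, ← integral_const_mul]
  exact (integral_finsetSum _ fun i _ => (hφ i).const_mul (c i)).symm

end MomentCone

section Support

variable {X ι : Type*} [TopologicalSpace X] [T2Space X] [LocallyCompactSpace X]
  [MeasurableSpace X] [OpensMeasurableSpace X] [Fintype ι] {μ : Measure X}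
  [IsFiniteMeasureOnCompacts μ] {φ : ι → X → ℝ}

lemma exists_mem_momentCone_dotProduct_neg (hφ : ∀ i, Continuous (φ i)) {x : X}
    (hx : x ∈ μ.support) {c : ι → ℝ} (hc : c ⬝ᵥ (fun i => φ i x) < 0) :
    ∃ g ∈ momentCone μ φ, c ⬝ᵥ g < 0 := by
  set p : X → ℝ := fun y => c ⬝ᵥ (fun i => φ i y)
  have hp : Continuous p := by fun_prop
  obtain ⟨K, hK, hKx⟩ := exists_compact_mem_nhds x
  set U := interior K ∩ {y | p y < p x / 2}
  have hU : IsOpen U := isOpen_interior.inter (isOpen_lt hp continuous_const)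
  have hUK : U ⊆ K := Set.inter_subset_left.trans interior_subset
  have hUx : U ∈ 𝓝 x :=
    hU.mem_nhds ⟨mem_interior_iff_mem_nhds.2 hKx, show p x < p x / 2 by linarith⟩
  have hμU_ne_top : μ U ≠ ⊤ := ((measure_mono hUK).trans_lt hK.measure_lt_top).ne
  have hμU : 0 < μ.real U :=
    ENNReal.toReal_pos ((Measure.mem_support_iff_forall x).1 hx U hUx).ne' hμU_ne_top
  have hφU (i : ι) : IntegrableOn (φ i) U μ :=
    ((hφ i).continuousOn.integrableOn_compact hK).mono_set hUK
  refine ⟨_, setIntegral_mem_momentCone hU.measurableSet hμU_ne_top hφU, ?_⟩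
  calc c ⬝ᵥ (fun i => ∫ y in U, φ i y ∂μ) = ∫ y in U, p y ∂μ := dotProduct_integral hφU c
    _ ≤ ∫ y in U, p x / 2 ∂μ :=
      setIntegral_mono_on (hp.continuousOn.integrableOn_compact hK |>.mono_set hUK)
        (integrableOn_const hμU_ne_top) hU.measurableSet fun y hy => hy.2.le
    _ = μ.real U * (p x / 2) := setIntegral_const _
    _ < 0 := mul_neg_of_pos_of_neg hμU (by linarith)

lemma exists_ne_zero_mem_momentCone (hφ : ∀ i, Continuous (φ i)) {x : X} (hx : x ∈ μ.support)
    {i₀ : ι} (hi₀ : φ i₀ x ≠ 0) : ∃ g ∈ momentCone μ φ, g ≠ 0 := by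
  classical
  obtain ⟨g, hg, hneg⟩ := exists_mem_momentCone_dotProduct_neg hφ hx
    (c := Pi.single i₀ (-φ i₀ x)) (by simpa using mul_self_pos.2 hi₀)
  exact ⟨g, hg, by rintro rfl; simp at hneg⟩

theorem integral_mem_closure_momentCone (hφ : ∀ i, Continuous (φ i)) {ν : Measure X}
    (hν : ∀ᵐ x ∂ν, x ∈ μ.support) (hφν : ∀ i, Integrable (φ i) ν) :
    (fun i => ∫ x, φ i x ∂ν) ∈ closure (momentCone μ φ : Set (ι → ℝ)) := by
  classical
  by_contra hγ
  obtain ⟨f, hf_nonneg, hfγ⟩ :=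
    ProperCone.hyperplane_separation_point (Submodule.closure (momentCone μ φ)) hγ
  have hf (v : ι → ℝ) : f v = (fun i => f (Pi.single i 1)) ⬝ᵥ v :=
    (f : (ι → ℝ) →ₗ[ℝ] ℝ).apply_eq_dotProduct_single v
  refine hfγ.not_ge ?_
  rw [hf, dotProduct_integral hφν]
  refine integral_nonneg_of_ae ?_
  filter_upwards [hν] with x hx
  by_contra! hneg
  obtain ⟨g, hg, hcg⟩ := exists_mem_momentCone_dotProduct_neg hφ hx hneg
  exact hcg.not_ge (hf g ▸ hf_nonneg g (subset_closure hg))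

end Support

lemma continuous_mono (n : ℕ) (i : Fin n → ℕ) : Continuous (mono n i) := by
  unfold mono
  fun_prop

lemma mono_zero (n : ℕ) (t : EuclideanSpace ℝ (Fin n)) : mono n 0 t = 1 := by
  simp [mono]

lemma RegularIdx.zero_mem {n : ℕ} {I : Finset (Fin n → ℕ)} (hI : RegularIdx n I) : 0 ∈ I := by
  obtain ⟨i, hi⟩ := hI.1
  exact hI.2 i hi 0 fun _ => Or.inl rfl

lemma RegularSet.subset_support {n : ℕ} {T : Set (EuclideanSpace ℝ (Fin n))}
    (hT : RegularSet n T) : T ⊆ (volume.restrict T).support := by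
  intro t ht
  refine Metric.nhds_basis_ball.mem_measureSupport.2 fun ε hε => ?_
  rw [Measure.restrict_apply Metric.isOpen_ball.measurableSet]
  convert hT.2 t ht ε hε using 2
  ext x
  simp [dist_eq_norm, and_comm]

theorem stmt_6_general (n : ℕ) (T : Set (EuclideanSpace ℝ (Fin n)))
    (hTreg : RegularSet n T) (I : Finset (Fin n → ℕ)) (hIreg : RegularIdx n I) :
    ∀ γ ∈ Gamma n T I, ∀ δ > (0 : ℝ), ∃ g ∈ GSet n T I, ‖g - γ‖ < δ := by
  rintro γ ⟨ν, hνT, hνint, hνγ⟩ δ hδ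
  have hφ (i : I) : Continuous (mono n i) := continuous_mono n i
  have hν : ∀ᵐ x ∂ν, x ∈ (volume.restrict T).support :=
    measure_mono_null (Set.compl_subset_compl.2 hTreg.subset_support) hνT
  have hγ : γ ∈ closure (momentCone (volume.restrict T) fun i : I => mono n i : Set (I → ℝ)) := by
    rw [← funext hνγ]
    exact integral_mem_closure_momentCone hφ hν hνint
  obtain ⟨t, ht⟩ := hTreg.1
  obtain ⟨v, hv, hv₀⟩ := exists_ne_zero_mem_momentCone hφ (hTreg.subset_support ht)
    (i₀ := ⟨0, hIreg.zero_mem⟩) (by simp [mono_zero])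
  rw [← PointedCone.closure_diff_zero _ hv hv₀] at hγ
  obtain ⟨g, ⟨hg, hg₀⟩, hgγ⟩ := Metric.mem_closure_iff.1 hγ δ hδ
  exact ⟨g, ⟨hg₀, hg⟩, by rwa [dist_comm, dist_eq_norm] at hgγ⟩

/-- Let `T ⊆ ℝⁿ` be a closed regular set and `I` a finite regular set of
multi-indices. Then `G_{T,I}` is dense in `Γ_{T,I}`: for every `γ ∈ Γ_{T,I}` and every
`δ > 0` there exists `g ∈ G_{T,I}` with `‖g - γ‖ < δ`. -/
theorem stmt_6 (n : ℕ) (T : Set (EuclideanSpace ℝ (Fin n))) (hT : IsClosed T)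
    (hTreg : RegularSet n T) (I : Finset (Fin n → ℕ)) (hIreg : RegularIdx n I) :
    ∀ γ ∈ Gamma n T I, ∀ δ > (0 : ℝ), ∃ g ∈ GSet n T I, ‖g - γ‖ < δ :=
  stmt_6_general n T hTreg I hIreg
end

section
/- Let F be a real vector space of dimension 2, let C' ⊆ F be an acute closed convex cone, let L' ⊆ F be a 1-dimensional linear subspace, and let φ' : L' → ℝ be a linear functional with φ'(l) > 0 for every l ∈ L' ∩ C' with l ≠ 0. Then there exists a linear functional Φ' : F → ℝ extending φ' such that Φ'(x) > 0 for every x ∈ C' with x ≠ 0. -/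
/-!
Extend `φ'` to some `Φ` on `F` and choose `ψ` with kernel `L'`, so that the extensions are the
`Φ + t • ψ`. On the compact set `K = C' ∩ sphere 0 1`, the parameters `t` making `Φ + t • ψ`
positive on `K ∩ {ψ ≥ 0}` form an open set containing a ray `[T, ∞)`, and symmetrically for
`K ∩ {ψ ≤ 0}`. These two sets cover `ℝ`: if `t` failed at `x` with `ψ x > 0` and at `y` with
`ψ y < 0`, then `ψ x • y - ψ y • x` would be a point of `C' ∩ L'`, nonzero by acuteness, on which
`φ'` is `≤ 0`. Since `ℝ` is connected, the two sets meet.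
-/

open Filter Topology Set

section PencilPositivity

variable {X : Type*} [TopologicalSpace X] {K : Set X} {f g : X → ℝ}

theorem eventually_forall_pos_add_mul_of_forall (hK : IsCompact K) (hg : Continuous g)
    {l : Filter ℝ} (h : ∀ y ∈ K, 0 ≤ g y →
      ∀ᶠ p : ℝ × X in l ×ˢ 𝓝 y, 0 ≤ g p.2 → 0 < f p.2 + p.1 * g p.2) :
    ∀ᶠ t in l, ∀ y ∈ K, 0 ≤ g y → 0 < f y + t * g y := by
  have hK' : ∀ᶠ p : ℝ × X in l ×ˢ 𝓝ˢ K, 0 ≤ g p.2 → 0 < f p.2 + p.1 * g p.2 := by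
    refine hK.mem_prod_nhdsSet_of_forall fun y hy ↦ ?_
    rcases lt_or_ge (g y) 0 with hgy | hgy
    · exact ((hg.tendsto y).eventually (gt_mem_nhds hgy)).prod_inr l |>.mono
        fun p hp hp' ↦ absurd hp' hp.not_ge
    · exact h y hy hgy
  exact hK'.curry.mono fun _ h ↦ h.self_of_nhdsSet

theorem isOpen_setOf_forall_pos_add_mul (hK : IsCompact K) (hf : Continuous f)
    (hg : Continuous g) : IsOpen {t : ℝ | ∀ y ∈ K, 0 ≤ g y → 0 < f y + t * g y} := by
  refine isOpen_iff_eventually.2 fun t₀ ht₀ ↦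
    eventually_forall_pos_add_mul_of_forall hK hg fun y hy hgy ↦ ?_
  have hcont : Continuous fun p : ℝ × X ↦ f p.2 + p.1 * g p.2 := by fun_prop
  rw [← nhds_prod_eq]
  exact (hcont.tendsto (t₀, y)).eventually (lt_mem_nhds (ht₀ y hy hgy)) |>.mono fun _ hp _ ↦ hp

theorem eventually_atTop_forall_pos_add_mul (hK : IsCompact K) (hf : Continuous f)
    (hg : Continuous g) (h0 : ∀ y ∈ K, g y = 0 → 0 < f y) :
    ∀ᶠ t in atTop, ∀ y ∈ K, 0 ≤ g y → 0 < f y + t * g y := by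
  refine eventually_forall_pos_add_mul_of_forall hK hg fun y hy hgy ↦ ?_
  obtain ⟨t₀, ht₀⟩ : ∃ t₀, 0 < f y + t₀ * g y := by
    rcases hgy.eq_or_lt with hgy | hgy
    · exact ⟨0, by simpa [← hgy] using h0 y hy hgy.symm⟩
    · exact ⟨(1 - f y) / g y, by field_simp; linarith⟩
  have hnear : ∀ᶠ z in 𝓝 y, 0 < f z + t₀ * g z :=
    ((hf.add (continuous_const.mul hg)).tendsto y).eventually (lt_mem_nhds ht₀)
  filter_upwards [(eventually_ge_atTop t₀).prod_mk hnear] with p ⟨hp₁, hp₂⟩ hp₃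
  nlinarith

theorem exists_forall_pos_add_mul (hK : IsCompact K) (hf : Continuous f) (hg : Continuous g)
    (h0 : ∀ y ∈ K, g y = 0 → 0 < f y)
    (hpair : ∀ x ∈ K, ∀ y ∈ K, 0 < g x → g y < 0 → 0 < g x * f y - g y * f x) :
    ∃ t, ∀ y ∈ K, 0 < f y + t * g y := by
  set V : (X → ℝ) → Set ℝ := fun k ↦ {t | ∀ y ∈ K, 0 ≤ k y → 0 < f y + t * k y}
  have h0' : ∀ y ∈ K, -g y = 0 → 0 < f y := fun y hy h ↦ h0 y hy (neg_eq_zero.1 h)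
  have hcover : V g ∪ Neg.neg ⁻¹' V (-g) = univ := by
    refine eq_univ_of_forall fun t ↦ ?_
    by_contra! ht
    simp only [V, mem_union, mem_preimage, mem_ofPred_eq, not_or, not_forall, not_lt,
      Pi.neg_apply, neg_mul_neg, neg_nonneg] at ht
    obtain ⟨⟨x, hx, hgx, hfx⟩, ⟨y, hy, hgy, hfy⟩⟩ := ht
    have hgx : 0 < g x := hgx.lt_of_ne fun h ↦ (h0 x hx h.symm).not_ge (by simpa [← h] using hfx)
    have hgy : g y < 0 := hgy.lt_of_ne fun h ↦ (h0 y hy h).not_ge (by simpa [h] using hfy)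
    nlinarith [hpair x hx y hy hgx hgy]
  obtain ⟨s, hs⟩ := (eventually_atTop_forall_pos_add_mul hK hf hg.neg h0').exists
  obtain ⟨t, htp, htm⟩ := nonempty_inter (isOpen_setOf_forall_pos_add_mul hK hf hg)
    ((isOpen_setOf_forall_pos_add_mul hK hf hg.neg).preimage continuous_neg) hcover
    (eventually_atTop_forall_pos_add_mul hK hf hg h0).exists ⟨-s, by simpa [V] using hs⟩
  refine ⟨t, fun y hy ↦ (le_total 0 (g y)).elim (htp y hy) fun hgy ↦ ?_⟩
  simpa [V] using htm y hy (by simpa using hgy)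

end PencilPositivity

section AcuteCone

variable {F : Type*} [AddCommGroup F] [Module ℝ F] {C : Set F}

theorem mul_sub_mul_pos_of_mem_acute_cone (hC_add : ∀ x ∈ C, ∀ y ∈ C, x + y ∈ C)
    (hC_smul : ∀ (c : ℝ), 0 ≤ c → ∀ x ∈ C, c • x ∈ C) (hC_acute : C ∩ (-C) = {0})
    {Φ ψ : F →ₗ[ℝ] ℝ} (hpos : ∀ z ∈ C, ψ z = 0 → z ≠ 0 → 0 < Φ z)
    {x y : F} (hx : x ∈ C) (hy : y ∈ C) (hψx : 0 < ψ x) (hψy : ψ y < 0) :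
    0 < ψ x * Φ y - ψ y * Φ x := by
  have hxC : ψ x • y ∈ C := hC_smul _ hψx.le y hy
  have hyC : (-ψ y) • x ∈ C := hC_smul _ (neg_nonneg.2 hψy.le) x hx
  have hz_ne : ψ x • y + (-ψ y) • x ≠ 0 := by
    intro hz
    have : ψ x • y ∈ C ∩ -C :=
      ⟨hxC, by rw [eq_neg_of_add_eq_zero_left hz]; exact neg_mem_neg.2 hyC⟩
    rw [hC_acute, mem_singleton_iff, smul_eq_zero] at this
    exact this.elim hψx.ne' fun h ↦ hψy.ne (by simp [h])
  have := hpos _ (hC_add _ hxC _ hyC) (by simp only [map_add, map_smul, smul_eq_mul]; ring) hz_ne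
  simpa [sub_eq_add_neg] using this

end AcuteCone

section NormedCone

variable {F : Type*} [NormedAddCommGroup F] [NormedSpace ℝ F] {C : Set F}

theorem pos_of_pos_on_unit_sphere (hC_smul : ∀ (c : ℝ), 0 ≤ c → ∀ x ∈ C, c • x ∈ C)
    {Φ : F →ₗ[ℝ] ℝ} (h : ∀ x ∈ C, ‖x‖ = 1 → 0 < Φ x) {x : F} (hx : x ∈ C) (hx0 : x ≠ 0) :
    0 < Φ x := by
  have hnx : 0 < ‖x‖ := norm_pos_iff.2 hx0
  have := h _ (hC_smul _ (inv_nonneg.2 hnx.le) x hx) (by simp [norm_smul, hnx.ne'])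
  rw [map_smul, smul_eq_mul] at this
  exact pos_of_mul_pos_right this (inv_nonneg.2 hnx.le)

theorem exists_pos_add_smul_of_acute_cone [FiniteDimensional ℝ F] (hC_closed : IsClosed C)
    (hC_add : ∀ x ∈ C, ∀ y ∈ C, x + y ∈ C) (hC_smul : ∀ (c : ℝ), 0 ≤ c → ∀ x ∈ C, c • x ∈ C)
    (hC_acute : C ∩ (-C) = {0}) {Φ ψ : F →ₗ[ℝ] ℝ}
    (hpos : ∀ z ∈ C, ψ z = 0 → z ≠ 0 → 0 < Φ z) :
    ∃ t : ℝ, ∀ x ∈ C, x ≠ 0 → 0 < (Φ + t • ψ) x := by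
  have hK : IsCompact (C ∩ Metric.sphere 0 1) := (isCompact_sphere 0 1).inter_left hC_closed
  obtain ⟨t, ht⟩ := exists_forall_pos_add_mul hK Φ.continuous_of_finiteDimensional
    ψ.continuous_of_finiteDimensional
    (fun y hy h ↦ hpos y hy.1 h (Metric.ne_of_mem_sphere hy.2 one_ne_zero))
    (fun x hx y hy ↦ mul_sub_mul_pos_of_mem_acute_cone hC_add hC_smul hC_acute hpos hx.1 hy.1)
  exact ⟨t, fun x hx hx0 ↦ pos_of_pos_on_unit_sphere hC_smul
    (fun y hy hy1 ↦ by simpa using ht y ⟨hy, by simpa using hy1⟩) hx hx0⟩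

end NormedCone

theorem Submodule.exists_ker_eq_of_finrank_quotient_eq_one {K V : Type*} [Field K]
    [AddCommGroup V] [Module K V] (p : Submodule K V) (h : Module.finrank K (V ⧸ p) = 1) :
    ∃ ψ : V →ₗ[K] K, LinearMap.ker ψ = p := by
  have : Module.Finite K (V ⧸ p) := Module.finite_of_finrank_eq_succ h
  let e : (V ⧸ p) ≃ₗ[K] K := LinearEquiv.ofFinrankEq _ _ (by rw [h, Module.finrank_self])
  exact ⟨e.toLinearMap ∘ₗ p.mkQ, by rw [LinearEquiv.ker_comp, Submodule.ker_mkQ]⟩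

/-- Let `F` be a real vector space of dimension 2, `C' ⊆ F` an acute closed
convex cone, `L' ⊆ F` a 1-dimensional linear subspace, and `φ' : L' → ℝ` a linear functional
with `φ' l > 0` for every `l ∈ L' ∩ C'` with `l ≠ 0`. Then there is a linear extension
`Φ' : F → ℝ` of `φ'` with `Φ' x > 0` for every `x ∈ C'` with `x ≠ 0`.
A convex cone `C'` is acute if `C' ∩ (-C') = {0}`. -/
theorem stmt_15 {F : Type*} [NormedAddCommGroup F] [NormedSpace ℝ F]
    (hF : Module.finrank ℝ F = 2)
    (C' : Set F) (hC_closed : IsClosed C')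
    (hC_add : ∀ x ∈ C', ∀ y ∈ C', x + y ∈ C')
    (hC_smul : ∀ (c : ℝ), 0 ≤ c → ∀ x ∈ C', c • x ∈ C')
    (hC_acute : C' ∩ (-C') = {0})
    (L' : Submodule ℝ F) (hL : Module.finrank ℝ L' = 1)
    (φ' : L' →ₗ[ℝ] ℝ)
    (hφ : ∀ l : L', (l : F) ∈ C' → (l : F) ≠ 0 → 0 < φ' l) :
    ∃ Φ' : F →ₗ[ℝ] ℝ, (∀ l : L', Φ' l = φ' l) ∧ ∀ x ∈ C', x ≠ 0 → 0 < Φ' x := by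
  have : FiniteDimensional ℝ F := .of_finrank_eq_succ hF
  obtain ⟨Φ, hΦ⟩ := LinearMap.exists_extend φ'
  obtain ⟨ψ, hψ⟩ := L'.exists_ker_eq_of_finrank_quotient_eq_one
    (by have := L'.finrank_quotient_add_finrank; omega)
  have hψL : ∀ z, ψ z = 0 ↔ z ∈ L' := fun z ↦ by rw [← LinearMap.mem_ker, hψ]
  have hΦL : ∀ l : L', Φ l = φ' l := fun l ↦ LinearMap.congr_fun hΦ l
  obtain ⟨t, ht⟩ := exists_pos_add_smul_of_acute_cone hC_closed hC_add hC_smul hC_acute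
    (Φ := Φ) (ψ := ψ) fun z hz hψz hz0 ↦ hΦL ⟨z, (hψL z).1 hψz⟩ ▸ hφ ⟨z, _⟩ hz hz0
  refine ⟨Φ + t • ψ, fun l ↦ ?_, ht⟩
  simp [hΦL, (hψL l).2 l.2]
end
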